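/- Let G be a finite group with |G| ≥ 2, c0, m positive integers, and b_x ≥ 0. Let x_1, …, x_m : Fin c0 → G → ℝ be inputs with ‖x_i‖ ≤ b_x for all i, and for g∈G write (g·x)(i, h) = x(i, g⁻¹h). For l : Fin m → G let A_l be the m×m Gram matrix (A_l)_{i,i'} = ⟨ l_i·x_i , l_{i'}·x_{i'} ⟩, and set M := max over all l : Fin m → G of the spectral (ℓ2→ℓ2 operator) norm ‖A_l‖. Then E_ε max_{l : Fin m → G} ‖ Σ_{i=1}^m ε_i · (l_i·x_i) ‖² ≤ 8·m·log|G|·M + m·b_x² + m·√(8·log|G|·M·b_x²), where the norm is the Euclidean norm on ℝ^{c0·|G|} and E_ε denotes the uniform average over sign vectors ε ∈ {-1,1}^m. -/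

import Mathlib

/-!
For every sign vector `ε` and every choice of translations `l`, the squared norm of
`∑ i, ε i • (l i • x i)` is the quadratic form `εᵀ A_l ε` of the Gram matrix, hence at most
`‖A_l‖ ‖ε‖² = m ‖A_l‖ ≤ m M`. Since `|G| ≥ 2` gives `8 log |G| ≥ 8 log 2 ≥ 1`, the bound `m M`
is already dominated by the first term of the right-hand side, and the other two terms are
nonnegative.
-/

open Finset

/-- Spectral (ℓ2→ℓ2 operator) norm of a real square matrix. -/
noncomputable def specNorm {m : ℕ} (A : Matrix (Fin m) (Fin m) ℝ) : ℝ :=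
  ‖Matrix.toEuclideanCLM (𝕜 := ℝ) A‖

open Matrix

lemma specNorm_nonneg {m : ℕ} (A : Matrix (Fin m) (Fin m) ℝ) : 0 ≤ specNorm A :=
  norm_nonneg _

lemma dotProduct_mulVec_le_specNorm_mul {m : ℕ} (A : Matrix (Fin m) (Fin m) ℝ)
    (v : Fin m → ℝ) : v ⬝ᵥ A *ᵥ v ≤ specNorm A * (v ⬝ᵥ v) := by
  set w : EuclideanSpace ℝ (Fin m) := WithLp.toLp 2 v
  have hw : ‖w‖ ^ 2 = v ⬝ᵥ v := by
    rw [← real_inner_self_eq_norm_sq, EuclideanSpace.inner_toLp_toLp, star_trivial]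
  calc v ⬝ᵥ A *ᵥ v = inner ℝ w (toEuclideanCLM (𝕜 := ℝ) A w) :=
        (inner_toEuclideanCLM A w w).symm
    _ ≤ ‖w‖ * ‖toEuclideanCLM (𝕜 := ℝ) A w‖ := real_inner_le_norm _ _
    _ ≤ ‖w‖ * (specNorm A * ‖w‖) := by
        gcongr
        exact (toEuclideanCLM (𝕜 := ℝ) A).le_opNorm w
    _ = specNorm A * (v ⬝ᵥ v) := by rw [← hw]; ring

lemma sum_sq_sum_mul_eq_dotProduct_gram_mulVec {m : ℕ} {α β : Type*} [Fintype α] [Fintype β]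
    (y : Fin m → α → β → ℝ) (v : Fin m → ℝ) :
    ∑ a, ∑ b, (∑ i, v i * y i a b) ^ 2
      = v ⬝ᵥ (Matrix.of fun i j => ∑ a, ∑ b, y i a b * y j a b) *ᵥ v := by
  simp only [sq, dotProduct, mulVec, of_apply, sum_mul, mul_sum, ← Fintype.sum_prod_type']
  exact Fintype.sum_equiv
    ⟨fun p => (p.2.2.2, p.2.2.1, p.1, p.2.1), fun q => (q.2.2.1, q.2.2.2, q.2.1, q.1),
      fun _ => rfl, fun _ => rfl⟩ _ _ fun p => by dsimp; ring

lemma sign_dotProduct_self {ι : Type*} [Fintype ι] (ε : ι → Bool) :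
    (fun i => if ε i then (1 : ℝ) else -1) ⬝ᵥ (fun i => if ε i then (1 : ℝ) else -1)
      = Fintype.card ι := by
  simp [dotProduct, apply_ite (fun t : ℝ => t * t)]

lemma sum_sq_signed_sum_le_specNorm_gram {m : ℕ} {α β : Type*} [Fintype α] [Fintype β]
    (y : Fin m → α → β → ℝ) (ε : Fin m → Bool) :
    ∑ a, ∑ b, (∑ i, (if ε i then (1 : ℝ) else -1) * y i a b) ^ 2
      ≤ m * specNorm (Matrix.of fun i j => ∑ a, ∑ b, y i a b * y j a b) := by
  have h := dotProduct_mulVec_le_specNorm_mul (Matrix.of fun i j => ∑ a, ∑ b, y i a b * y j a b)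
    (fun i => if ε i then (1 : ℝ) else -1)
  rwa [sign_dotProduct_self, Fintype.card_fin, mul_comm,
    ← sum_sq_sum_mul_eq_dotProduct_gram_mulVec] at h

lemma sum_div_two_pow_le {m : ℕ} {f : (Fin m → Bool) → ℝ} {C : ℝ} (hf : ∀ ε, f ε ≤ C) :
    (∑ ε, f ε) / 2 ^ m ≤ C := by
  rw [div_le_iff₀ (by positivity)]
  simpa [mul_comm] using sum_le_sum fun ε (_ : ε ∈ univ) => hf ε

lemma one_le_eight_mul_log {n : ℕ} (hn : 2 ≤ n) : 1 ≤ 8 * Real.log n := by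
  have : Real.log 2 ≤ Real.log n := Real.log_le_log two_pos (by exact_mod_cast hn)
  linarith [Real.log_two_gt_d9]

theorem max_pooling_key_inequality_general
    {G : Type*} [Group G] [Fintype G] (hG : 2 ≤ Fintype.card G)
    (c0 m : ℕ)
    (bx : ℝ)
    (x : Fin m → Fin c0 → G → ℝ)
    (M : ℝ)
    (hM : M = ⨆ l : Fin m → G, specNorm (Matrix.of fun i i' : Fin m =>
      ∑ k : Fin c0, ∑ g : G, x i k ((l i)⁻¹ * g) * x i' k ((l i')⁻¹ * g))) :
    (∑ ε : Fin m → Bool,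
        ⨆ l : Fin m → G,
          ∑ k : Fin c0, ∑ g : G,
            (∑ i : Fin m, (if ε i then (1 : ℝ) else -1) * x i k ((l i)⁻¹ * g)) ^ 2)
        / 2 ^ m
      ≤ 8 * m * Real.log (Fintype.card G) * M + m * bx ^ 2 +
          m * Real.sqrt (8 * Real.log (Fintype.card G) * M * bx ^ 2) := by
  have hgram_le : ∀ l : Fin m → G, specNorm (Matrix.of fun i i' : Fin m =>
      ∑ k : Fin c0, ∑ g : G, x i k ((l i)⁻¹ * g) * x i' k ((l i')⁻¹ * g)) ≤ M :=
    hM ▸ le_ciSup (Finite.bddAbove_range _)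
  have hM0 : 0 ≤ M := (specNorm_nonneg _).trans (hgram_le 1)
  have hlog := one_le_eight_mul_log hG
  refine (sum_div_two_pow_le (C := m * M) fun ε => ciSup_le fun l => ?_).trans ?_
  · exact (sum_sq_signed_sum_le_specNorm_gram (fun i k g => x i k ((l i)⁻¹ * g)) ε).trans
      (mul_le_mul_of_nonneg_left (hgram_le l) m.cast_nonneg)
  · nlinarith [mul_nonneg m.cast_nonneg hM0, sq_nonneg bx,
      Real.sqrt_nonneg (8 * Real.log (Fintype.card G) * M * bx ^ 2)]

theorem max_pooling_key_inequality
    {G : Type*} [Group G] [Fintype G] (hG : 2 ≤ Fintype.card G)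
    (c0 m : ℕ) (hc0 : 0 < c0) (hm : 0 < m)
    (bx : ℝ) (hbx : 0 ≤ bx)
    (x : Fin m → Fin c0 → G → ℝ)
    (hx : ∀ i, Real.sqrt (∑ k : Fin c0, ∑ g : G, (x i k g) ^ 2) ≤ bx)
    (M : ℝ)
    (hM : M = ⨆ l : Fin m → G, specNorm (Matrix.of fun i i' : Fin m =>
      ∑ k : Fin c0, ∑ g : G, x i k ((l i)⁻¹ * g) * x i' k ((l i')⁻¹ * g))) :
    (∑ ε : Fin m → Bool,
        ⨆ l : Fin m → G,
          ∑ k : Fin c0, ∑ g : G,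
            (∑ i : Fin m, (if ε i then (1 : ℝ) else -1) * x i k ((l i)⁻¹ * g)) ^ 2)
        / 2 ^ m
      ≤ 8 * m * Real.log (Fintype.card G) * M + m * bx ^ 2 +
          m * Real.sqrt (8 * Real.log (Fintype.card G) * M * bx ^ 2) :=
  max_pooling_key_inequality_general hG c0 m bx x M hM
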